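/- arXiv:1503.03314 — 2 statements merged into one kernel-verified Lean document; each statement's English description precedes it below -/
import Mathlib

section
/- For every δ > 0, every even integer k ≥ 2, and every z ≤ δ, the relaxing functions satisfy β_k(z;δ) ≤ β_{k+2}(z;δ) ≤ β_e(z;δ), where β_e(z;δ) = exp(1 − z/δ) − 1 − ln(δ). -/
/-- Polynomial relaxing function β_k(z;δ). -/
noncomputable def betaK (k : ℕ) (δ z : ℝ) : ℝ :=
  ((k - 1 : ℝ) / k) * (((z - k * δ) / ((k - 1 : ℝ) * δ)) ^ k - 1) - Real.log δ

/-- Exponential relaxing function β_e(z;δ). -/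
noncomputable def betaE (δ z : ℝ) : ℝ := Real.exp (1 - z / δ) - 1 - Real.log δ

/-!
Put `t = 1 - z / δ ≥ 0` and `k = n + 1`. Since `k` is even, `β_k(z; δ) + ln δ` equals
`n / (n + 1) * ((1 + t / n) ^ (n + 1) - 1) = ∑_{j ≤ n} (n (n - 1) ⋯ (n - j + 1) / n ^ j) t ^ (j + 1) / (j + 1)!`.
The coefficients `∏_{i < j} (1 - i / n)` lie in `[0, 1]` and increase with `n`, so these sums of
nonnegative terms increase with `n` and stay below `∑_j t ^ (j + 1) / (j + 1)! ≤ exp t - 1`.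
-/

open Finset Nat

theorem Nat.descFactorial_mul_pow_le_of_le {n m : ℕ} (h : n ≤ m) (j : ℕ) :
    n.descFactorial j * m ^ j ≤ m.descFactorial j * n ^ j := by
  induction j with
  | zero => simp
  | succ j ih =>
    have step : (n - j) * m ≤ (m - j) * n := by
      rcases le_total n j with hnj | hjn
      · simp [Nat.sub_eq_zero_of_le hnj]
      · zify [hjn, hjn.trans h]
        nlinarith
    calc n.descFactorial (j + 1) * m ^ (j + 1)
        = ((n - j) * m) * (n.descFactorial j * m ^ j) := by
          rw [Nat.descFactorial_succ, pow_succ]; ring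
      _ ≤ ((m - j) * n) * (m.descFactorial j * n ^ j) := Nat.mul_le_mul step ih
      _ = m.descFactorial (j + 1) * n ^ (j + 1) := by
          rw [Nat.descFactorial_succ, pow_succ]; ring

noncomputable def descPowRatio (n j : ℕ) : ℝ := n.descFactorial j / (n : ℝ) ^ j

theorem descPowRatio_nonneg (n j : ℕ) : 0 ≤ descPowRatio n j := by
  unfold descPowRatio; positivity

theorem descPowRatio_le_one (n j : ℕ) : descPowRatio n j ≤ 1 := by
  unfold descPowRatio
  rcases Nat.eq_zero_or_pos n with rfl | hn
  · rcases j with _ | j <;> simp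
  · rw [div_le_one (by positivity)]
    exact_mod_cast Nat.descFactorial_le_pow n j

theorem descPowRatio_le_of_le {n m : ℕ} (hn : 0 < n) (h : n ≤ m) (j : ℕ) :
    descPowRatio n j ≤ descPowRatio m j := by
  have hm : 0 < m := hn.trans_le h
  unfold descPowRatio
  rw [div_le_div_iff₀ (by positivity) (by positivity)]
  exact_mod_cast Nat.descFactorial_mul_pow_le_of_le h j

noncomputable def relaxPoly (n : ℕ) (t : ℝ) : ℝ := n / (n + 1) * ((1 + t / n) ^ (n + 1) - 1)

theorem relaxPoly_eq_sum {n : ℕ} (hn : 0 < n) (t : ℝ) :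
    relaxPoly n t = ∑ j ∈ range (n + 1), descPowRatio n j * t ^ (j + 1) / (j + 1)! := by
  have hn' : (n : ℝ) ≠ 0 := by positivity
  rw [relaxPoly, add_comm 1, add_pow, sum_range_succ']
  simp only [one_pow, mul_one, pow_zero, Nat.choose_zero_right, Nat.cast_one, add_sub_cancel_right]
  rw [mul_sum]
  refine sum_congr rfl fun j _ => ?_
  have hchoose : ((n + 1) * n.descFactorial j : ℝ) = (j + 1)! * (n + 1).choose (j + 1) := by
    exact_mod_cast (Nat.succ_descFactorial_succ n j).symm.trans
      (Nat.descFactorial_eq_factorial_mul_choose (n + 1) (j + 1))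
  rw [descPowRatio]
  field_simp
  rw [hchoose, div_pow]
  field_simp
  ring

theorem relaxPoly_le_of_le {n m : ℕ} (hn : 0 < n) (h : n ≤ m) {t : ℝ} (ht : 0 ≤ t) :
    relaxPoly n t ≤ relaxPoly m t := by
  rw [relaxPoly_eq_sum hn, relaxPoly_eq_sum (hn.trans_le h)]
  calc ∑ j ∈ range (n + 1), descPowRatio n j * t ^ (j + 1) / (j + 1)!
      ≤ ∑ j ∈ range (n + 1), descPowRatio m j * t ^ (j + 1) / (j + 1)! := by
        gcongr with j
        exact descPowRatio_le_of_le hn h j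
    _ ≤ ∑ j ∈ range (m + 1), descPowRatio m j * t ^ (j + 1) / (j + 1)! := by
        gcongr
        intro j _ _
        have := descPowRatio_nonneg m j
        positivity

theorem relaxPoly_le_exp_sub_one {n : ℕ} (hn : 0 < n) {t : ℝ} (ht : 0 ≤ t) :
    relaxPoly n t ≤ Real.exp t - 1 := by
  rw [relaxPoly_eq_sum hn]
  calc ∑ j ∈ range (n + 1), descPowRatio n j * t ^ (j + 1) / (j + 1)!
      ≤ ∑ j ∈ range (n + 1), t ^ (j + 1) / (j + 1)! := by
        gcongr with j
        exact mul_le_of_le_one_left (by positivity) (descPowRatio_le_one n j)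
    _ = (∑ i ∈ range (n + 2), t ^ i / i !) - 1 := by
        rw [sum_range_succ' (fun i => t ^ i / (i ! : ℝ))]; simp
    _ ≤ Real.exp t - 1 := by
        linarith [Real.sum_le_exp_of_nonneg ht (n + 2)]

theorem betaK_succ_eq {n : ℕ} (hn : 0 < n) (he : Even (n + 1)) {δ : ℝ} (hδ : δ ≠ 0) (z : ℝ) :
    betaK (n + 1) δ z = relaxPoly n (1 - z / δ) - Real.log δ := by
  have hn' : (n : ℝ) ≠ 0 := by positivity
  have hbase : (z - (n + 1 : ℕ) * δ) / (((n + 1 : ℕ) - 1 : ℝ) * δ) = -(1 + (1 - z / δ) / n) := by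
    push_cast
    rw [add_sub_cancel_right]
    field_simp
    ring
  rw [betaK, hbase, he.neg_pow, relaxPoly]
  push_cast
  ring_nf

theorem stmt2 (k : ℕ) (hk : 2 ≤ k) (hke : Even k) (δ z : ℝ) (hδ : 0 < δ) (hz : z ≤ δ) :
    betaK k δ z ≤ betaK (k + 2) δ z ∧ betaK (k + 2) δ z ≤ betaE δ z := by
  obtain ⟨n, rfl⟩ : ∃ n, k = n + 1 := ⟨k - 1, by omega⟩
  have hn : 0 < n := by omega
  have ht : 0 ≤ 1 - z / δ := sub_nonneg.2 ((div_le_one hδ).2 hz)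
  have he : Even (n + 2 + 1) := by rw [show n + 2 + 1 = n + 1 + 2 by ring]; exact hke.add even_two
  rw [show n + 1 + 2 = n + 2 + 1 by ring, betaK_succ_eq hn hke hδ.ne',
    betaK_succ_eq (by omega) he hδ.ne', betaE]
  exact ⟨by gcongr; exact relaxPoly_le_of_le hn (by omega) ht,
    by gcongr; exact relaxPoly_le_exp_sub_one (by omega) ht⟩
end

section
/- Consider the relaxed weight-recentered logarithmic barrier for state constraints, B̂_x(x) = ∑_{i=1}^{q_x} (1+w_x^i)·(b(−C_x^i x + d_x^i) + ln(d_x^i)), where b(z) = −ln(z) for z > δ and b(z) = β_2(z;δ) for z ≤ δ with quadratic relaxing function β_2. Then the Hessian satisfies ∇²B̂_x(x) ⪯ (1/δ²)·C_xᵀ diag(1 + w_x) C_x for all x ∈ ℝ^n, and consequently B̂_x(x) ≤ xᵀ M_x x for all x, where M_x = (1/(2δ²))·C_xᵀ diag(1 + w_x) C_x, provided B̂_x(0) = 0 and ∇B̂_x(0) = 0. -/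
open Matrix

/-- Quadratic relaxing function β_2(z;δ). -/
noncomputable def beta2 (δ z : ℝ) : ℝ :=
  (1 / 2) * (((z - 2 * δ) / δ) ^ 2 - 1) - Real.log δ

/-- Relaxed logarithmic barrier for ℝ₊ with quadratic relaxing function. -/
noncomputable def bRel (δ z : ℝ) : ℝ := if δ < z then -Real.log z else beta2 δ z

/-!
The relaxed barrier `b = bRel δ` is `C¹`, and its derivative is differentiable with
`b'' z = 1 / z ^ 2` for `z > δ` and `b'' z = 1 / δ ^ 2` for `z ≤ δ`; in particular
`b'' ≤ 1 / δ ^ 2`. As `B̂ₓ` is a weighted sum of `b` composed with affine functions, its Hessian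
is `∑ i, (1 + wᵢ) b''(dᵢ - Cᵢ x) Cᵢᵀ Cᵢ ⪯ δ⁻² Cᵀ diag(1 + w) C`. The quadratic upper bound is
then the second-order Taylor estimate along the segment from `0` to `x`, where value and
gradient vanish.
-/

open Set

theorem hasDerivAt_ite_lt {a : ℝ} {u v u' v' : ℝ → ℝ}
    (hu : ∀ z, a ≤ z → HasDerivAt u (u' z) z) (hv : ∀ z, z ≤ a → HasDerivAt v (v' z) z)
    (hval : u a = v a) (hder : u' a = v' a) (z : ℝ) :
    HasDerivAt (fun z => if a < z then u z else v z) (if a < z then u' z else v' z) z := by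
  rcases lt_trichotomy z a with hz | rfl | hz
  · have hev : (fun z => if a < z then u z else v z) =ᶠ[nhds z] v := by
      filter_upwards [Iio_mem_nhds hz] with y hy
      simp [not_lt.2 (mem_Iio.1 hy).le]
    simpa [not_lt.2 hz.le] using (hv z hz.le).congr_of_eventuallyEq hev
  · have hleft : HasDerivWithinAt (fun y => if z < y then u y else v y) (v' z) (Iic z) z :=
      (hv z le_rfl).hasDerivWithinAt.congr (fun y hy => by simp [not_lt.2 (mem_Iic.1 hy)]) (by simp)
    have hright : HasDerivWithinAt (fun y => if z < y then u y else v y) (v' z) (Ici z) z := by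
      refine (hder ▸ (hu z le_rfl).hasDerivWithinAt).congr (fun y hy => ?_) (by simp [hval])
      rcases (mem_Ici.1 hy).lt_or_eq with h | rfl
      · simp [h]
      · simp [hval]
    simpa [Iic_union_Ici] using hleft.union hright
  · have hev : (fun z => if a < z then u z else v z) =ᶠ[nhds z] u := by
      filter_upwards [Ioi_mem_nhds hz] with y hy
      simp [mem_Ioi.1 hy]
    simpa [hz] using (hu z hz.le).congr_of_eventuallyEq hev

theorem le_add_mul_add_sq_of_hasDerivAt {f f' f'' : ℝ → ℝ} {K : ℝ}
    (hf : ∀ t, HasDerivAt f (f' t) t) (hf' : ∀ t, HasDerivAt f' (f'' t) t)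
    (hK : ∀ t, f'' t ≤ K) (t : ℝ) : f t ≤ f 0 + f' 0 * t + K / 2 * t ^ 2 := by
  set h : ℝ → ℝ := fun s => f 0 + f' 0 * s + K / 2 * s ^ 2 - f s
  have hh : ∀ s, HasDerivAt h (f' 0 + K * s - f' s) s := fun s =>
    (((((hasDerivAt_id' s).const_mul (f' 0)).const_add (f 0)).fun_add
      ((hasDerivAt_pow 2 s).const_mul (K / 2))).fun_sub (hf s)).congr_deriv (by ring)
  have hh' : ∀ s, HasDerivAt (fun s => f' 0 + K * s - f' s) (K - f'' s) s := fun s => by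
    simpa using (((hasDerivAt_id' s).const_mul K).const_add (f' 0)).fun_sub (hf' s)
  have hconv : ConvexOn ℝ univ h :=
    convexOn_of_hasDerivWithinAt2_nonneg convex_univ
      (fun s _ => (hh s).differentiableAt.continuousAt.continuousWithinAt)
      (fun s _ => (hh s).hasDerivWithinAt) (fun s _ => (hh' s).hasDerivWithinAt)
      (fun s _ => sub_nonneg.2 (hK s))
  have hmin : IsMinOn h univ 0 := hconv.isMinOn_of_rightDeriv_eq_zero (by simp)
    (by simpa using ((hh 0).hasDerivWithinAt (s := Ioi 0)).derivWithin (uniqueDiffWithinAt_Ioi 0))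
  have := hmin (mem_univ t)
  simp only [h, mem_ofPred_eq] at this
  linarith

variable {E : Type*} [NormedAddCommGroup E] [NormedSpace ℝ E]

theorem le_add_fderiv_add_of_fderiv_fderiv_le {F : E → ℝ} {K : ℝ} (hF : Differentiable ℝ F)
    (hF' : Differentiable ℝ (fderiv ℝ F)) (y x : E)
    (hK : ∀ t : ℝ, fderiv ℝ (fderiv ℝ F) (y + t • x) x x ≤ K) :
    F (y + x) ≤ F y + fderiv ℝ F y x + K / 2 := by
  have hline : ∀ t : ℝ, HasDerivAt (fun s : ℝ => y + s • x) x t := fun t => by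
    simpa using ((hasDerivAt_id t).smul_const x).const_add y
  have h1 : ∀ t : ℝ, HasDerivAt (fun s : ℝ => F (y + s • x))
      (fderiv ℝ F (y + t • x) x) t := fun t => (hF _).hasFDerivAt.comp_hasDerivAt t (hline t)
  have h2 : ∀ t : ℝ, HasDerivAt (fun s : ℝ => fderiv ℝ F (y + s • x) x)
      (fderiv ℝ (fderiv ℝ F) (y + t • x) x x) t := fun t =>
    ((ContinuousLinearMap.apply ℝ ℝ x).hasFDerivAt.comp_hasDerivAt t
      ((hF' _).hasFDerivAt.comp_hasDerivAt t (hline t)))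
  simpa using le_add_mul_add_sq_of_hasDerivAt h1 h2 hK 1

section RidgeSum

variable {ι : Type*} [Fintype ι] {g g' g'' : ι → ℝ → ℝ} (ℓ : ι → E →L[ℝ] ℝ)

theorem hasFDerivAt_sum_comp_clm (hg : ∀ i t, HasDerivAt (g i) (g' i t) t) (x : E) :
    HasFDerivAt (fun y => ∑ i, g i (ℓ i y)) (∑ i, g' i (ℓ i x) • ℓ i) x :=
  HasFDerivAt.fun_sum fun i _ => (hg i _).comp_hasFDerivAt x (ℓ i).hasFDerivAt

theorem fderiv_sum_comp_clm (hg : ∀ i t, HasDerivAt (g i) (g' i t) t) :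
    fderiv ℝ (fun y => ∑ i, g i (ℓ i y)) = fun x => ∑ i, g' i (ℓ i x) • ℓ i :=
  funext fun x => (hasFDerivAt_sum_comp_clm ℓ hg x).fderiv

theorem hasFDerivAt_fderiv_sum_comp_clm (hg : ∀ i t, HasDerivAt (g i) (g' i t) t)
    (hg' : ∀ i t, HasDerivAt (g' i) (g'' i t) t) (x : E) :
    HasFDerivAt (fderiv ℝ fun y => ∑ i, g i (ℓ i y))
      (∑ i, (g'' i (ℓ i x) • ℓ i).smulRight (ℓ i)) x := by
  rw [fderiv_sum_comp_clm ℓ hg]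
  exact HasFDerivAt.fun_sum fun i _ =>
    ((hg' i _).comp_hasFDerivAt x (ℓ i).hasFDerivAt).smul_const (ℓ i)

theorem fderiv_fderiv_sum_comp_clm_apply (hg : ∀ i t, HasDerivAt (g i) (g' i t) t)
    (hg' : ∀ i t, HasDerivAt (g' i) (g'' i t) t) (x v : E) :
    fderiv ℝ (fderiv ℝ fun y => ∑ i, g i (ℓ i y)) x v v =
      ∑ i, g'' i (ℓ i x) * ℓ i v ^ 2 := by
  rw [(hasFDerivAt_fderiv_sum_comp_clm ℓ hg hg' x).fderiv]
  simp only [FunLike.coe_sum, Finset.sum_apply, ContinuousLinearMap.smulRight_apply,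
    FunLike.coe_smul, Pi.smul_apply, smul_eq_mul]
  exact Finset.sum_congr rfl fun i _ => by ring

end RidgeSum

theorem dotProduct_transpose_mul_diagonal_mul_mulVec {m n : Type*} [Fintype m] [Fintype n]
    [DecidableEq m] (A : Matrix m n ℝ) (c : m → ℝ) (v : n → ℝ) :
    v ⬝ᵥ ((Aᵀ * diagonal c * A) *ᵥ v) = ∑ i, c i * (A *ᵥ v) i ^ 2 := by
  rw [← mulVec_mulVec, ← mulVec_mulVec, dotProduct_mulVec, vecMul_transpose]
  simp only [dotProduct, mulVec_diagonal]
  exact Finset.sum_congr rfl fun i _ => by ring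

noncomputable def bRelDeriv (δ z : ℝ) : ℝ := if δ < z then -z⁻¹ else (z - 2 * δ) / δ ^ 2

noncomputable def bRelDeriv2 (δ z : ℝ) : ℝ := if δ < z then (z ^ 2)⁻¹ else (δ ^ 2)⁻¹

section RelaxedBarrier

variable {δ : ℝ} (hδ : 0 < δ)
include hδ

theorem hasDerivAt_bRel (z : ℝ) : HasDerivAt (bRel δ) (bRelDeriv δ z) z := by
  unfold bRel bRelDeriv
  refine hasDerivAt_ite_lt (u := fun z => -Real.log z) (v := beta2 δ)
    (v' := fun z => (z - 2 * δ) / δ ^ 2)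
    (fun z hz => (Real.hasDerivAt_log (hδ.trans_le hz).ne').neg)
    (fun z _ => ?_) ?_ ?_ z
  · have := ((((hasDerivAt_id' z).sub_const (2 * δ)).div_const δ).pow 2).sub_const 1
      |>.const_mul (1 / 2) |>.sub_const (Real.log δ)
    exact this.congr_deriv (by norm_num; field_simp)
  · rw [beta2, show (δ - 2 * δ) / δ = -1 by field_simp; ring]
    ring
  · field_simp
    ring

theorem hasDerivAt_bRelDeriv (z : ℝ) : HasDerivAt (bRelDeriv δ) (bRelDeriv2 δ z) z := by
  unfold bRelDeriv bRelDeriv2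
  refine hasDerivAt_ite_lt (u := fun z => -z⁻¹) (v := fun z => (z - 2 * δ) / δ ^ 2)
    (u' := fun z => (z ^ 2)⁻¹) (v' := fun _ => (δ ^ 2)⁻¹)
    (fun z hz => by simpa using (hasDerivAt_inv (hδ.trans_le hz).ne').fun_neg)
    (fun z _ => ?_) ?_ rfl z
  · simpa [one_div] using ((hasDerivAt_id' z).sub_const (2 * δ)).div_const (δ ^ 2)
  · field_simp
    ring

theorem bRelDeriv2_le (z : ℝ) : bRelDeriv2 δ z ≤ (δ ^ 2)⁻¹ := by
  unfold bRelDeriv2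
  split_ifs with hz
  · exact inv_anti₀ (by positivity) (pow_le_pow_left₀ hδ.le hz.le 2)
  · exact le_rfl

theorem hasDerivAt_mul_bRel_sub_add_log (c d t : ℝ) :
    HasDerivAt (fun t => c * (bRel δ (d - t) + Real.log d)) (-(c * bRelDeriv δ (d - t))) t := by
  simpa using (((hasDerivAt_bRel hδ _).comp t ((hasDerivAt_id' t).const_sub d)).add_const
    (Real.log d)).const_mul c

theorem hasDerivAt_neg_mul_bRelDeriv_sub (c d t : ℝ) :
    HasDerivAt (fun t => -(c * bRelDeriv δ (d - t))) (c * bRelDeriv2 δ (d - t)) t := by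
  simpa using (((hasDerivAt_bRelDeriv hδ _).comp t
    ((hasDerivAt_id' t).const_sub d)).const_mul c).fun_neg

end RelaxedBarrier

theorem stmt9_general (n qx : ℕ) (Cx : Matrix (Fin qx) (Fin n) ℝ) (dx w : Fin qx → ℝ)
    (δ : ℝ) (hδ : 0 < δ)
    (hw : ∀ i, 0 ≤ w i) :
    let Bx : (Fin n → ℝ) → ℝ := fun x =>
      ∑ i, (1 + w i) * (bRel δ (dx i - (Cx *ᵥ x) i) + Real.log (dx i))
    let D : Matrix (Fin qx) (Fin qx) ℝ := Matrix.diagonal fun i => 1 + w i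
    Bx 0 = 0 → fderiv ℝ Bx 0 = 0 →
      (∀ x v : Fin n → ℝ,
          (fderiv ℝ (fderiv ℝ Bx) x) v v ≤ (1 / δ ^ 2) * (v ⬝ᵥ ((Cxᵀ * D * Cx) *ᵥ v))) ∧
      (∀ x : Fin n → ℝ,
          Bx x ≤ x ⬝ᵥ ((((1 : ℝ) / (2 * δ ^ 2)) • (Cxᵀ * D * Cx)) *ᵥ x)) := by
  intro Bx D hB0 hgrad
  let ℓ : Fin qx → (Fin n → ℝ) →L[ℝ] ℝ := fun i =>
    (ContinuousLinearMap.proj i).comp (mulVecLin Cx).toContinuousLinearMap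
  have hBx : Bx = fun y => ∑ i, (1 + w i) * (bRel δ (dx i - ℓ i y) + Real.log (dx i)) := rfl
  have hg := fun i => hasDerivAt_mul_bRel_sub_add_log hδ (1 + w i) (dx i)
  have hg' := fun i => hasDerivAt_neg_mul_bRelDeriv_sub hδ (1 + w i) (dx i)
  have hHess : ∀ x v : Fin n → ℝ,
      fderiv ℝ (fderiv ℝ Bx) x v v ≤ 1 / δ ^ 2 * (v ⬝ᵥ ((Cxᵀ * D * Cx) *ᵥ v)) := by
    intro x v
    rw [hBx, fderiv_fderiv_sum_comp_clm_apply ℓ hg hg',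
      dotProduct_transpose_mul_diagonal_mul_mulVec, Finset.mul_sum]
    refine Finset.sum_le_sum fun i _ => ?_
    have hwi : 0 ≤ 1 + w i := by linarith [hw i]
    calc (1 + w i) * bRelDeriv2 δ (dx i - ℓ i x) * (Cx *ᵥ v) i ^ 2
        ≤ (1 + w i) * (δ ^ 2)⁻¹ * (Cx *ᵥ v) i ^ 2 := by gcongr; exact bRelDeriv2_le hδ _
      _ = 1 / δ ^ 2 * ((1 + w i) * (Cx *ᵥ v) i ^ 2) := by ring
  refine ⟨hHess, fun x => ?_⟩
  have hdiff : Differentiable ℝ Bx := fun y =>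
    (hasFDerivAt_sum_comp_clm ℓ hg y).differentiableAt
  have hdiff' : Differentiable ℝ (fderiv ℝ Bx) := fun y =>
    (hasFDerivAt_fderiv_sum_comp_clm ℓ hg hg' y).differentiableAt
  have htaylor := le_add_fderiv_add_of_fderiv_fderiv_le hdiff hdiff' 0 x fun t => hHess _ x
  rw [zero_add, hB0, hgrad, _root_.zero_apply, zero_add, zero_add] at htaylor
  rw [smul_mulVec, dotProduct_smul, smul_eq_mul]
  convert htaylor using 1
  ring

theorem stmt9 (n qx : ℕ) (Cx : Matrix (Fin qx) (Fin n) ℝ) (dx w : Fin qx → ℝ)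
    (δ : ℝ) (hδ : 0 < δ) (hδd : ∀ i, δ ≤ dx i) (hd : ∀ i, 0 < dx i)
    (hw : ∀ i, 0 ≤ w i) :
    let Bx : (Fin n → ℝ) → ℝ := fun x =>
      ∑ i, (1 + w i) * (bRel δ (dx i - (Cx *ᵥ x) i) + Real.log (dx i))
    let D : Matrix (Fin qx) (Fin qx) ℝ := Matrix.diagonal fun i => 1 + w i
    Bx 0 = 0 → fderiv ℝ Bx 0 = 0 →
      (∀ x v : Fin n → ℝ,
          (fderiv ℝ (fderiv ℝ Bx) x) v v ≤ (1 / δ ^ 2) * (v ⬝ᵥ ((Cxᵀ * D * Cx) *ᵥ v))) ∧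
      (∀ x : Fin n → ℝ,
          Bx x ≤ x ⬝ᵥ ((((1 : ℝ) / (2 * δ ^ 2)) • (Cxᵀ * D * Cx)) *ᵥ x)) :=
  stmt9_general n qx Cx dx w δ hδ hw
end
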